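/- With h(z) and h*(z) defined as below, for every z ∈ ℂ∖{0} at which all the displayed infinite products and theta functions are defined and nonzero: h(z)·h*(z) / (h(1/z)·h*(1/z)) = Θ_{x^{2r}}(x^{2c}·z)·Θ_{x^{2r}}(x^{2c+2p_N}/z) / (Θ_{x^{2r}}(x^{2c}/z)·Θ_{x^{2r}}(x^{2c+2p_N}·z)). -/

import Mathlib

/-!
Splitting off the first column of a double product,
`(x^a v; x^s, x^t)_∞ = (x^a v; x^s)_∞ · (x^{a+t} v; x^s, x^t)_∞`, turns every quotient of double
products whose exponents differ by `t = 2N` into a single product. In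
`h(z) h*(z) / (h(1/z) h*(1/z))` the `z²`-blocks and the factors `2 ≤ j ≤ N - 1` cancel, and what
is left pairs the `c`-block of `h` with the `j = 1` factor (recall `p₁ = 0`) and the `p_N`-block of
`h*` with the `j = N` factor. Each pair, at parameter `a`, collapses to
`(x^a v; x^{2r})_∞ / (x^{2r-a} v; x^{2r})_∞`, which is `Θ_{x^{2r}}(x^a v)` up to the factor
`(x^{2r}; x^{2r})_∞ (x^{2r-a} v; x^{2r})_∞ (x^{2r-a}/v; x^{2r})_∞`, invariant under `v ↦ 1/v`.
-/

noncomputable section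

/-- `x^w := exp(w · log x)` for a real base `x` and a complex exponent `w`. -/
def cxp (x : ℝ) (w : ℂ) : ℂ := Complex.exp (w * Real.log x)

/-- The infinite product `(z;p)_∞ = ∏_{n≥0} (1 - z pⁿ)`. -/
def qpoch (z p : ℂ) : ℂ := ∏' n : ℕ, (1 - z * p ^ n)

/-- The double infinite product `(z;p,q)_∞ = ∏_{n₁,n₂≥0} (1 - z p^{n₁} q^{n₂})`. -/
def qpoch2 (z p q : ℂ) : ℂ := ∏' n : ℕ × ℕ, (1 - z * p ^ n.1 * q ^ n.2)

/-- The theta function `Θ_p(z) = (p;p)_∞ (z;p)_∞ (p/z;p)_∞`. -/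
def jtheta (p z : ℂ) : ℂ := qpoch p p * qpoch z p * qpoch (p / z) p

/-- The displayed double product `(x^a · v ; x^s, x^t)_∞`. -/
def dq (x s t a : ℝ) (v : ℂ) : ℂ := qpoch2 (cxp x a * v) (cxp x s) (cxp x t)

/-- The boundary normalization function `h(z)`. -/
def hfun (x : ℝ) (N r : ℕ) (c : ℝ) (p : ℕ → ℝ) (z : ℂ) : ℂ :=
  (dq x (2 * r) (4 * N) (2 * r + 2 * N - 2) (z ^ 2)⁻¹ *
      dq x (2 * r) (4 * N) (2 * N + 2) (z ^ 2)⁻¹ /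
    (dq x (2 * r) (4 * N) (2 * r) (z ^ 2)⁻¹ *
      dq x (2 * r) (4 * N) (4 * N) (z ^ 2)⁻¹)) *
  (dq x (2 * r) (2 * N) (2 * N + 2 * c) z⁻¹ *
      dq x (2 * r) (2 * N) (2 * r - 2 * c) z⁻¹ /
    (dq x (2 * r) (2 * N) (2 * N + 2 * r - 2 * c - 2) z⁻¹ *
      dq x (2 * r) (2 * N) (2 * c + 2) z⁻¹)) *
  ∏ j ∈ Finset.Icc 2 N,
    dq x (2 * r) (2 * N) (2 * r + 2 * N - 2 * c - 2 * p j) z⁻¹ *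
      dq x (2 * r) (2 * N) (2 * c + 2 * p j) z⁻¹ /
    (dq x (2 * r) (2 * N) (2 * r + 2 * N - 2 * c - 2 * p j - 2) z⁻¹ *
      dq x (2 * r) (2 * N) (2 * c + 2 + 2 * p j) z⁻¹)

/-- The dual boundary normalization function `h*(z)`. -/
def hstar (x : ℝ) (N r : ℕ) (c : ℝ) (p : ℕ → ℝ) (z : ℂ) : ℂ :=
  (dq x (2 * r) (4 * N) (2 * r + 2 * N - 2) (z ^ 2) *
      dq x (2 * r) (4 * N) (2 * N + 2) (z ^ 2) /
    (dq x (2 * r) (4 * N) (2 * r) (z ^ 2) *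
      dq x (2 * r) (4 * N) (4 * N) (z ^ 2))) *
  (dq x (2 * r) (2 * N) (2 * N + 2 * c + 2 * p N) z *
      dq x (2 * r) (2 * N) (2 * r - 2 * c - 2 * p N) z /
    (dq x (2 * r) (2 * N) (2 * N + 2 * r - 2 * c - 2 - 2 * p N) z *
      dq x (2 * r) (2 * N) (2 * c + 2 + 2 * p N) z)) *
  ∏ j ∈ Finset.Icc 1 (N - 1),
    dq x (2 * r) (2 * N) (2 * r + 2 * N - 2 * c - 2 * p j) z *
      dq x (2 * r) (2 * N) (2 * c + 2 * p j) z /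
    (dq x (2 * r) (2 * N) (2 * r + 2 * N - 2 * c - 2 * p j - 2) z *
      dq x (2 * r) (2 * N) (2 * c + 2 + 2 * p j) z)

lemma multipliable_one_sub_of_summable_norm {ι : Type*} {g : ι → ℂ}
    (hg : Summable fun i => ‖g i‖) : Multipliable fun i => 1 - g i := by
  simpa [sub_eq_add_neg] using
    multipliable_one_add_of_summable (f := fun i => -g i) (by simpa using hg)

section QPochhammer

variable {q t : ℂ}

lemma multipliable_one_sub_mul_pow (hq : ‖q‖ < 1) (w : ℂ) :
    Multipliable fun n : ℕ => 1 - w * q ^ n :=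
  multipliable_one_sub_of_summable_norm <| by
    simpa [norm_mul, norm_pow] using
      (summable_geometric_of_lt_one (norm_nonneg q) hq).mul_left ‖w‖

lemma multipliable_one_sub_mul_pow_mul_pow (hq : ‖q‖ < 1) (ht : ‖t‖ < 1) (w : ℂ) :
    Multipliable fun n : ℕ × ℕ => 1 - w * q ^ n.1 * t ^ n.2 :=
  multipliable_one_sub_of_summable_norm <| by
    simpa [norm_mul, norm_pow, mul_assoc] using
      ((summable_geometric_of_lt_one (norm_nonneg q) hq).mul_left ‖w‖).mul_of_nonneg
        (summable_geometric_of_lt_one (norm_nonneg t) ht)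
        (fun _ => by positivity) (fun _ => by positivity)

lemma qpoch_ne_zero {w : ℂ} (hq : ‖q‖ < 1) (hw : ∀ n : ℕ, w * q ^ n ≠ 1) :
    qpoch w q ≠ 0 := by
  simpa [qpoch, sub_eq_add_neg] using
    tprod_one_add_ne_zero_of_summable (f := fun n : ℕ => -(w * q ^ n))
      (fun n => by rw [← sub_eq_add_neg]; exact sub_ne_zero.2 (hw n).symm)
      (by simpa [norm_mul, norm_pow] using
        (summable_geometric_of_lt_one (norm_nonneg q) hq).mul_left ‖w‖)

lemma qpoch_self_ne_zero (hq : ‖q‖ < 1) : qpoch q q ≠ 0 :=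
  qpoch_ne_zero hq fun n h => by
    have : ‖q * q ^ n‖ < 1 := by
      rw [← pow_succ', norm_pow]
      exact pow_lt_one₀ (norm_nonneg q) hq n.succ_ne_zero
    simp [h] at this

lemma multipliable_qpoch_mul_pow (hq : ‖q‖ < 1) (ht : ‖t‖ < 1) (w : ℂ) :
    Multipliable fun k : ℕ => qpoch (w * t ^ k) q :=
  ((Equiv.sigmaEquivProd ℕ ℕ).multipliable_iff.mpr
    (multipliable_one_sub_mul_pow_mul_pow ht hq w)).sigma' fun k =>
      multipliable_one_sub_mul_pow hq (w * t ^ k)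

lemma qpoch2_eq_tprod_qpoch (hq : ‖q‖ < 1) (ht : ‖t‖ < 1) (w : ℂ) :
    qpoch2 w q t = ∏' k : ℕ, qpoch (w * t ^ k) q := by
  rw [qpoch2, ← (Equiv.prodComm ℕ ℕ).tprod_eq]
  calc ∏' n : ℕ × ℕ, (1 - w * q ^ n.2 * t ^ n.1)
      = ∏' n : ℕ × ℕ, (1 - w * t ^ n.1 * q ^ n.2) := tprod_congr fun n => by ring
    _ = ∏' k : ℕ, qpoch (w * t ^ k) q :=
      (multipliable_one_sub_mul_pow_mul_pow ht hq w).tprod_prod' fun k =>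
        multipliable_one_sub_mul_pow hq (w * t ^ k)

lemma qpoch2_eq_qpoch_mul_qpoch2 (hq : ‖q‖ < 1) (ht : ‖t‖ < 1) (w : ℂ) :
    qpoch2 w q t = qpoch w q * qpoch2 (w * t) q t := by
  have hshift : Multipliable fun k : ℕ => qpoch (w * t ^ (k + 1)) q :=
    (multipliable_qpoch_mul_pow hq ht (w * t)).congr fun k => by rw [pow_succ', mul_assoc]
  rw [qpoch2_eq_tprod_qpoch hq ht, qpoch2_eq_tprod_qpoch hq ht,
    tprod_eq_zero_mul' (f := fun k => qpoch (w * t ^ k) q) hshift, pow_zero, mul_one]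
  congr 1
  exact tprod_congr fun k => by rw [pow_succ', mul_assoc]

end QPochhammer

section Cxp

variable {x : ℝ}

lemma cxp_add (a b : ℂ) : cxp x (a + b) = cxp x a * cxp x b := by
  rw [cxp, cxp, cxp, ← Complex.exp_add, add_mul]

lemma cxp_sub (a b : ℂ) : cxp x (a - b) = cxp x a / cxp x b := by
  rw [cxp, cxp, cxp, ← Complex.exp_sub, sub_mul]

lemma norm_cxp_lt_one (hx0 : 0 < x) (hx1 : x < 1) {a : ℝ} (ha : 0 < a) : ‖cxp x a‖ < 1 := by
  rw [cxp, ← Complex.ofReal_mul, Complex.norm_exp_ofReal, Real.exp_lt_one_iff]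
  exact mul_neg_of_pos_of_neg ha (Real.log_neg hx0 hx1)

end Cxp

section Blocks

variable {x : ℝ} (hx0 : 0 < x) (hx1 : x < 1) {s t : ℝ} (hs : 0 < s) (ht : 0 < t)

/-- With `s = 2r`, `t = 2N`: `hBlock x s t (2c) (1/z)` is the second bracket of `h(z)`, and
`hBlock x s t (2c + 2p_N) z` that of `h*(z)`. -/
def hBlock (x s t a : ℝ) (v : ℂ) : ℂ :=
  dq x s t (t + a) v * dq x s t (s - a) v / (dq x s t (t + s - a - 2) v * dq x s t (a + 2) v)

/-- The `j`-th factor of the products in `h(z)` (at `v = 1/z`) and `h*(z)` (at `v = z`), with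
`a = 2c + 2p_j`. -/
def prodBlock (x s t a : ℝ) (v : ℂ) : ℂ :=
  dq x s t (s + t - a) v * dq x s t a v / (dq x s t (s + t - a - 2) v * dq x s t (a + 2) v)

lemma hBlock_add (c e : ℝ) (v : ℂ) :
    dq x s t (t + c + e) v * dq x s t (s - c - e) v /
        (dq x s t (t + s - c - 2 - e) v * dq x s t (c + 2 + e) v) =
      hBlock x s t (c + e) v := by
  unfold hBlock; ring_nf

lemma prodBlock_add (c e : ℝ) (v : ℂ) :
    dq x s t (s + t - c - e) v * dq x s t (c + e) v /
        (dq x s t (s + t - c - e - 2) v * dq x s t (c + 2 + e) v) =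
      prodBlock x s t (c + e) v := by
  unfold prodBlock; ring_nf

lemma jtheta_cxp_mul (a : ℝ) (v : ℂ) :
    jtheta (cxp x s) (cxp x a * v) =
      qpoch (cxp x s) (cxp x s) * qpoch (cxp x a * v) (cxp x s) *
        qpoch (cxp x (s - a) * v⁻¹) (cxp x s) := by
  rw [jtheta, cxp_sub, div_mul_eq_div_div, div_eq_mul_inv _ v]

def symmQpoch (x s a : ℝ) (v : ℂ) : ℂ :=
  qpoch (cxp x s) (cxp x s) * qpoch (cxp x (s - a) * v) (cxp x s) *
    qpoch (cxp x (s - a) * v⁻¹) (cxp x s)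

lemma symmQpoch_inv (a : ℝ) (v : ℂ) : symmQpoch x s a v⁻¹ = symmQpoch x s a v := by
  rw [symmQpoch, symmQpoch, inv_inv, mul_right_comm]

include hx0 hx1 hs ht

lemma dq_eq_qpoch_mul_dq (a : ℝ) (v : ℂ) :
    dq x s t a v = qpoch (cxp x a * v) (cxp x s) * dq x s t (a + t) v := by
  rw [dq, dq, qpoch2_eq_qpoch_mul_qpoch2 (norm_cxp_lt_one hx0 hx1 hs)
    (norm_cxp_lt_one hx0 hx1 ht), Complex.ofReal_add, cxp_add, mul_right_comm]

lemma qpoch_ne_zero_of_dq_ne_zero {a : ℝ} {v : ℂ} (h : dq x s t a v ≠ 0) :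
    qpoch (cxp x a * v) (cxp x s) ≠ 0 :=
  left_ne_zero_of_mul (dq_eq_qpoch_mul_dq hx0 hx1 hs ht a v ▸ h)

lemma hBlock_mul_qpoch (a : ℝ) (v : ℂ) :
    hBlock x s t a v * qpoch (cxp x a * v) (cxp x s) =
      prodBlock x s t a v * qpoch (cxp x (s - a) * v) (cxp x s) := by
  have ha := dq_eq_qpoch_mul_dq hx0 hx1 hs ht a v
  have hsa := dq_eq_qpoch_mul_dq hx0 hx1 hs ht (s - a) v
  rw [add_comm a t] at ha
  rw [sub_add_eq_add_sub, Complex.ofReal_sub] at hsa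
  rw [hBlock, prodBlock, ha, hsa, add_comm t s]
  ring

lemma symmQpoch_ne_zero {a : ℝ} {v : ℂ} (hB : hBlock x s t a v ≠ 0)
    (hB' : hBlock x s t a v⁻¹ ≠ 0) : symmQpoch x s a v ≠ 0 := by
  have hv := qpoch_ne_zero_of_dq_ne_zero hx0 hx1 hs ht
    (right_ne_zero_of_mul (left_ne_zero_of_mul hB))
  have hv' := qpoch_ne_zero_of_dq_ne_zero hx0 hx1 hs ht
    (right_ne_zero_of_mul (left_ne_zero_of_mul hB'))
  rw [Complex.ofReal_sub] at hv hv'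
  exact mul_ne_zero (mul_ne_zero (qpoch_self_ne_zero (norm_cxp_lt_one hx0 hx1 hs)) hv) hv'

lemma jtheta_cxp_mul_hBlock (a : ℝ) (v : ℂ) :
    jtheta (cxp x s) (cxp x a * v) * hBlock x s t a v =
      prodBlock x s t a v * symmQpoch x s a v := by
  rw [jtheta_cxp_mul, symmQpoch]
  linear_combination (qpoch (cxp x s) (cxp x s) * qpoch (cxp x (s - a) * v⁻¹) (cxp x s)) *
    hBlock_mul_qpoch hx0 hx1 hs ht a v

lemma jtheta_cxp_mul_ne_zero {a : ℝ} {v : ℂ} (hF : prodBlock x s t a v ≠ 0)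
    (hB : hBlock x s t a v ≠ 0) (hB' : hBlock x s t a v⁻¹ ≠ 0) :
    jtheta (cxp x s) (cxp x a * v) ≠ 0 := by
  have h := jtheta_cxp_mul_hBlock hx0 hx1 hs ht a v
  exact left_ne_zero_of_mul (h ▸ mul_ne_zero hF (symmQpoch_ne_zero hx0 hx1 hs ht hB hB'))

end Blocks

section BoundaryFunctions

variable (x : ℝ) (N r : ℕ) (c : ℝ) (p : ℕ → ℝ)

def aBlock (u : ℂ) : ℂ :=
  dq x (2 * r) (4 * N) (2 * r + 2 * N - 2) u * dq x (2 * r) (4 * N) (2 * N + 2) u /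
    (dq x (2 * r) (4 * N) (2 * r) u * dq x (2 * r) (4 * N) (4 * N) u)

lemma hfun_eq (v : ℂ) :
    hfun x N r c p v = aBlock x N r (v ^ 2)⁻¹ * hBlock x (2 * r) (2 * N) (2 * c) v⁻¹ *
      ∏ j ∈ Finset.Icc 2 N, prodBlock x (2 * r) (2 * N) (2 * c + 2 * p j) v⁻¹ := by
  simp only [hfun, aBlock, hBlock, ← prodBlock_add]

lemma hstar_eq (v : ℂ) :
    hstar x N r c p v = aBlock x N r (v ^ 2) * hBlock x (2 * r) (2 * N) (2 * c + 2 * p N) v *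
      ∏ j ∈ Finset.Icc 1 (N - 1), prodBlock x (2 * r) (2 * N) (2 * c + 2 * p j) v := by
  simp only [hstar, aBlock, ← hBlock_add, ← prodBlock_add]

lemma hfun_ne_zero {v : ℂ} (hA : aBlock x N r (v ^ 2)⁻¹ ≠ 0)
    (hB : hBlock x (2 * r) (2 * N) (2 * c) v⁻¹ ≠ 0)
    (hF : ∀ j ∈ Finset.Icc 2 N, prodBlock x (2 * r) (2 * N) (2 * c + 2 * p j) v⁻¹ ≠ 0) :
    hfun x N r c p v ≠ 0 := by
  rw [hfun_eq]
  exact mul_ne_zero (mul_ne_zero hA hB) (Finset.prod_ne_zero_iff.2 hF)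

lemma hstar_ne_zero {v : ℂ} (hA : aBlock x N r (v ^ 2) ≠ 0)
    (hG : hBlock x (2 * r) (2 * N) (2 * c + 2 * p N) v ≠ 0)
    (hF : ∀ j ∈ Finset.Icc 1 (N - 1), prodBlock x (2 * r) (2 * N) (2 * c + 2 * p j) v ≠ 0) :
    hstar x N r c p v ≠ 0 := by
  rw [hstar_eq]
  exact mul_ne_zero (mul_ne_zero hA hG) (Finset.prod_ne_zero_iff.2 hF)

lemma hfun_mul_eq_hstar_inv_mul (hN : 1 ≤ N) (hp1 : p 1 = 0) (v : ℂ) :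
    hfun x N r c p v * (hBlock x (2 * r) (2 * N) (2 * c + 2 * p N) v⁻¹ *
        prodBlock x (2 * r) (2 * N) (2 * c) v⁻¹) =
      hstar x N r c p v⁻¹ * (hBlock x (2 * r) (2 * N) (2 * c) v⁻¹ *
        prodBlock x (2 * r) (2 * N) (2 * c + 2 * p N) v⁻¹) := by
  set F : ℕ → ℂ := fun j => prodBlock x (2 * r) (2 * N) (2 * c + 2 * p j) v⁻¹
  have hF1 : F 1 = prodBlock x (2 * r) (2 * N) (2 * c) v⁻¹ := by simp [F, hp1]
  have hbot : F 1 * ∏ j ∈ Finset.Icc 2 N, F j = ∏ j ∈ Finset.Icc 1 N, F j := by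
    rw [← Finset.insert_Icc_add_one_left_eq_Icc hN, Finset.prod_insert (by simp)]
    rfl
  have htop : (∏ j ∈ Finset.Icc 1 (N - 1), F j) * F N = ∏ j ∈ Finset.Icc 1 N, F j := by
    obtain ⟨n, rfl⟩ := Nat.exists_eq_add_of_le' hN
    rw [Nat.add_sub_cancel, Finset.prod_Icc_succ_top (by omega)]
  rw [hfun_eq, hstar_eq, inv_pow, ← hF1]
  linear_combination
    (aBlock x N r (v ^ 2)⁻¹ * hBlock x (2 * r) (2 * N) (2 * c) v⁻¹ *
      hBlock x (2 * r) (2 * N) (2 * c + 2 * p N) v⁻¹) * (hbot - htop)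

lemma hfun_mul_jtheta_eq (hx0 : 0 < x) (hx1 : x < 1) (hN : 1 ≤ N) (hr : 0 < r)
    (hp1 : p 1 = 0) (v : ℂ) (hB : hBlock x (2 * r) (2 * N) (2 * c) v⁻¹ ≠ 0)
    (hG : hBlock x (2 * r) (2 * N) (2 * c + 2 * p N) v⁻¹ ≠ 0) :
    hfun x N r c p v * jtheta (cxp x (2 * r : ℝ)) (cxp x (2 * c : ℝ) * v⁻¹) *
        symmQpoch x (2 * r) (2 * c + 2 * p N) v =
      hstar x N r c p v⁻¹ * jtheta (cxp x (2 * r : ℝ)) (cxp x (2 * c + 2 * p N : ℝ) * v⁻¹) *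
        symmQpoch x (2 * r) (2 * c) v := by
  have hs : (0 : ℝ) < 2 * r := by positivity
  have ht : (0 : ℝ) < 2 * N := by positivity
  have Ta := jtheta_cxp_mul_hBlock hx0 hx1 hs ht (2 * c) v⁻¹
  have Tb := jtheta_cxp_mul_hBlock hx0 hx1 hs ht (2 * c + 2 * p N) v⁻¹
  rw [symmQpoch_inv] at Ta Tb
  refine mul_right_cancel₀ (mul_ne_zero hB hG) ?_
  linear_combination
    (symmQpoch x (2 * r) (2 * c + 2 * p N) v *
        hBlock x (2 * r) (2 * N) (2 * c + 2 * p N) v⁻¹ * hfun x N r c p v) * Ta -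
      (symmQpoch x (2 * r) (2 * c) v * hBlock x (2 * r) (2 * N) (2 * c) v⁻¹ *
        hstar x N r c p v⁻¹) * Tb +
      (symmQpoch x (2 * r) (2 * c) v * symmQpoch x (2 * r) (2 * c + 2 * p N) v) *
        hfun_mul_eq_hstar_inv_mul x N r c p hN hp1 v

lemma hfun_mul_hstar_div_eq (hx0 : 0 < x) (hx1 : x < 1) (hN : 1 ≤ N) (hr : 0 < r)
    (hp1 : p 1 = 0) {z : ℂ}
    (hA : ∀ u ∈ ({z ^ 2, (z ^ 2)⁻¹} : Set ℂ), aBlock x N r u ≠ 0)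
    (hB : ∀ v ∈ ({z, z⁻¹} : Set ℂ), hBlock x (2 * r) (2 * N) (2 * c) v ≠ 0)
    (hG : ∀ v ∈ ({z, z⁻¹} : Set ℂ), hBlock x (2 * r) (2 * N) (2 * c + 2 * p N) v ≠ 0)
    (hF : ∀ j ∈ Finset.Icc 1 N, ∀ v ∈ ({z, z⁻¹} : Set ℂ),
      prodBlock x (2 * r) (2 * N) (2 * c + 2 * p j) v ≠ 0) :
    hfun x N r c p z * hstar x N r c p z / (hfun x N r c p z⁻¹ * hstar x N r c p z⁻¹) =
      jtheta (cxp x (2 * r)) (cxp x (2 * c) * z) *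
          jtheta (cxp x (2 * r)) (cxp x (2 * c + 2 * p N) * z⁻¹) /
        (jtheta (cxp x (2 * r)) (cxp x (2 * c) * z⁻¹) *
          jtheta (cxp x (2 * r)) (cxp x (2 * c + 2 * p N) * z)) := by
  have hs : (0 : ℝ) < 2 * r := by positivity
  have ht : (0 : ℝ) < 2 * N := by positivity
  have hz : z ∈ ({z, z⁻¹} : Set ℂ) := .inl rfl
  have hw : z⁻¹ ∈ ({z, z⁻¹} : Set ℂ) := .inr rfl
  have hBw : hBlock x (2 * r) (2 * N) (2 * c) z⁻¹⁻¹ ≠ 0 := by rw [inv_inv]; exact hB z hz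
  have hGw : hBlock x (2 * r) (2 * N) (2 * c + 2 * p N) z⁻¹⁻¹ ≠ 0 := by
    rw [inv_inv]; exact hG z hz
  have hHw : hfun x N r c p z⁻¹ ≠ 0 :=
    hfun_ne_zero x N r c p (by simpa using hA _ (.inl rfl)) hBw
      fun j hj => by simpa using hF j (Finset.Icc_subset_Icc_left one_le_two hj) z hz
  have hSw : hstar x N r c p z⁻¹ ≠ 0 :=
    hstar_ne_zero x N r c p (by simpa using hA _ (.inr rfl)) (hG z⁻¹ hw)
      fun j hj => hF j (Finset.Icc_subset_Icc_right (Nat.sub_le N 1) hj) z⁻¹ hw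
  have hΘaw := jtheta_cxp_mul_ne_zero hx0 hx1 hs ht
    (by simpa [hp1] using hF 1 (Finset.mem_Icc.2 ⟨le_rfl, hN⟩) z⁻¹ hw) (hB z⁻¹ hw) hBw
  have hΘbz := jtheta_cxp_mul_ne_zero hx0 hx1 hs ht
    (hF N (Finset.mem_Icc.2 ⟨hN, le_rfl⟩) z hz) (hG z hz) (hG z⁻¹ hw)
  have hKa := symmQpoch_ne_zero hx0 hx1 hs ht (hB z hz) (hB z⁻¹ hw)
  have hKb := symmQpoch_ne_zero hx0 hx1 hs ht (hG z hz) (hG z⁻¹ hw)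
  have eq_z := hfun_mul_jtheta_eq x N r c p hx0 hx1 hN hr hp1 z (hB z⁻¹ hw) (hG z⁻¹ hw)
  have eq_w := hfun_mul_jtheta_eq x N r c p hx0 hx1 hN hr hp1 z⁻¹ hBw hGw
  rw [inv_inv, symmQpoch_inv, symmQpoch_inv] at eq_w
  push_cast at hΘaw hΘbz eq_z eq_w
  rw [div_eq_div_iff (mul_ne_zero hHw hSw) (mul_ne_zero hΘaw hΘbz)]
  refine mul_right_cancel₀ (mul_ne_zero hKa hKb) ?_
  linear_combination
    (hstar x N r c p z * jtheta (cxp x (2 * r)) (cxp x (2 * c + 2 * p N) * z) *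
        symmQpoch x (2 * r) (2 * c) z) * eq_z -
      (hstar x N r c p z⁻¹ * jtheta (cxp x (2 * r)) (cxp x (2 * c + 2 * p N) * z⁻¹) *
        symmQpoch x (2 * r) (2 * c) z) * eq_w

end BoundaryFunctions

theorem h_hstar_ratio_general (x : ℝ) (hx0 : 0 < x) (hx1 : x < 1)
    (N r : ℕ) (hN : 2 ≤ N) (hr : N + 2 ≤ r)
    (c : ℝ)
    (p : ℕ → ℝ) (hp1 : p 1 = 0)
    (z : ℂ)
    (hq4 : ∀ a ∈ ({2 * (r : ℝ) + 2 * N - 2, 2 * (N : ℝ) + 2, 2 * (r : ℝ),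
        4 * (N : ℝ)} : Set ℝ), ∀ v ∈ ({z ^ 2, (z ^ 2)⁻¹} : Set ℂ),
      dq x (2 * r) (4 * N) a v ≠ 0)
    (hq2 : ∀ a : ℝ,
      (a ∈ ({2 * (N : ℝ) + 2 * c, 2 * (r : ℝ) - 2 * c, 2 * (N : ℝ) + 2 * r - 2 * c - 2,
          2 * c + 2, 2 * (N : ℝ) + 2 * c + 2 * p N, 2 * (r : ℝ) - 2 * c - 2 * p N,
          2 * (N : ℝ) + 2 * r - 2 * c - 2 - 2 * p N, 2 * c + 2 + 2 * p N} : Set ℝ) ∨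
        ∃ j ∈ Finset.Icc 1 N,
          a ∈ ({2 * (r : ℝ) + 2 * N - 2 * c - 2 * p j, 2 * c + 2 * p j,
            2 * (r : ℝ) + 2 * N - 2 * c - 2 * p j - 2, 2 * c + 2 + 2 * p j} : Set ℝ)) →
      ∀ v ∈ ({z, z⁻¹} : Set ℂ), dq x (2 * r) (2 * N) a v ≠ 0) :
    hfun x N r c p z * hstar x N r c p z /
        (hfun x N r c p z⁻¹ * hstar x N r c p z⁻¹)
      = jtheta (cxp x (2 * r)) (cxp x (2 * c) * z) *
          jtheta (cxp x (2 * r)) (cxp x (2 * c + 2 * p N) * z⁻¹) /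
        (jtheta (cxp x (2 * r)) (cxp x (2 * c) * z⁻¹) *
          jtheta (cxp x (2 * r)) (cxp x (2 * c + 2 * p N) * z)) := by
  refine hfun_mul_hstar_div_eq x N r c p hx0 hx1 (by omega) (by omega) hp1
    (fun u hu => ?_) (fun v hv => ?_) (fun v hv => ?_) (fun j hj v hv => ?_)
  · refine div_ne_zero (mul_ne_zero ?_ ?_) (mul_ne_zero ?_ ?_) <;> exact hq4 _ (by simp) u hu
  · refine div_ne_zero (mul_ne_zero ?_ ?_) (mul_ne_zero ?_ ?_) <;>
      exact hq2 _ (.inl (by simp)) v hv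
  · rw [← hBlock_add]
    refine div_ne_zero (mul_ne_zero ?_ ?_) (mul_ne_zero ?_ ?_) <;>
      exact hq2 _ (.inl (by simp)) v hv
  · rw [← prodBlock_add]
    refine div_ne_zero (mul_ne_zero ?_ ?_) (mul_ne_zero ?_ ?_) <;>
      exact hq2 _ (.inr ⟨j, hj, by simp⟩) v hv

/-- The self-consistency relation between `h` and `h*`:
`h(z)h*(z)/(h(1/z)h*(1/z)) = Θ(x^{2c}z)Θ(x^{2c+2p_N}/z)/(Θ(x^{2c}/z)Θ(x^{2c+2p_N}z))`. -/
theorem h_hstar_ratio (x : ℝ) (hx0 : 0 < x) (hx1 : x < 1)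
    (N r : ℕ) (hN : 2 ≤ N) (hr : N + 2 ≤ r)
    (c : ℝ) (hc0 : 0 < c) (hc1 : c < 1)
    (p : ℕ → ℝ) (hp1 : p 1 = 0)
    (z : ℂ) (hz : z ≠ 0)
    (hq4 : ∀ a ∈ ({2 * (r : ℝ) + 2 * N - 2, 2 * (N : ℝ) + 2, 2 * (r : ℝ),
        4 * (N : ℝ)} : Set ℝ), ∀ v ∈ ({z ^ 2, (z ^ 2)⁻¹} : Set ℂ),
      dq x (2 * r) (4 * N) a v ≠ 0)
    (hq2 : ∀ a : ℝ,
      (a ∈ ({2 * (N : ℝ) + 2 * c, 2 * (r : ℝ) - 2 * c, 2 * (N : ℝ) + 2 * r - 2 * c - 2,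
          2 * c + 2, 2 * (N : ℝ) + 2 * c + 2 * p N, 2 * (r : ℝ) - 2 * c - 2 * p N,
          2 * (N : ℝ) + 2 * r - 2 * c - 2 - 2 * p N, 2 * c + 2 + 2 * p N} : Set ℝ) ∨
        ∃ j ∈ Finset.Icc 1 N,
          a ∈ ({2 * (r : ℝ) + 2 * N - 2 * c - 2 * p j, 2 * c + 2 * p j,
            2 * (r : ℝ) + 2 * N - 2 * c - 2 * p j - 2, 2 * c + 2 + 2 * p j} : Set ℝ)) →
      ∀ v ∈ ({z, z⁻¹} : Set ℂ), dq x (2 * r) (2 * N) a v ≠ 0)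
    (hθ : ∀ v ∈ ({z, z⁻¹} : Set ℂ),
      jtheta (cxp x (2 * r)) (cxp x (2 * c) * v) ≠ 0 ∧
      jtheta (cxp x (2 * r)) (cxp x (2 * c + 2 * p N) * v) ≠ 0) :
    hfun x N r c p z * hstar x N r c p z /
        (hfun x N r c p z⁻¹ * hstar x N r c p z⁻¹)
      = jtheta (cxp x (2 * r)) (cxp x (2 * c) * z) *
          jtheta (cxp x (2 * r)) (cxp x (2 * c + 2 * p N) * z⁻¹) /
        (jtheta (cxp x (2 * r)) (cxp x (2 * c) * z⁻¹) *
          jtheta (cxp x (2 * r)) (cxp x (2 * c + 2 * p N) * z)) :=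
  h_hstar_ratio_general x hx0 hx1 N r hN hr c p hp1 z hq4 hq2
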